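/- Fix an integer n ≥ 1 and let φ be a C¹ function on [0,1] whose support is contained in the open interval (0,1); write g = φ′. Then for all integers 0 ≤ j ≤ n and 1 ≤ j′ ≤ n, the quantity 𝒲_{j,j′} := √n·Σ_{x=1}^n φ_{j′}(x)·ψ_j(x−1)·g(u_x) satisfies 𝒲_{j,j′} = −(n/2)^{1/2}·(1 − δ_{0,j}/2)^{1/2}·cos(πk_j/2)·[ ĝ_{n,o}(j−j′) − ĝ_{n,o}(j+j′) ] − (n/2)^{1/2}·sin(πk_j/2)·[ ĝ_{n,e}(j+j′) − ĝ_{n,e}(j−j′) ]. -/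

import Mathlib

open Real

noncomputable section

/-- Discrete Neumann eigenfunctions
`ψ_j(x) = ((2 − δ_{0,j})/(n+1))^{1/2} cos(πj(2x+1)/(2(n+1)))`. -/
def psiN (n j x : ℕ) : ℝ :=
  Real.sqrt ((2 - (if j = 0 then (1:ℝ) else 0)) / ((n : ℝ) + 1))
    * Real.cos (Real.pi * (j : ℝ) * (2 * (x : ℝ) + 1) / (2 * ((n : ℝ) + 1)))

/-- Discrete Dirichlet eigenfunctions `φ_j(x) = (2/(n+1))^{1/2} sin(πjx/(n+1))`. -/
def phiD (n j x : ℕ) : ℝ :=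
  Real.sqrt (2 / ((n : ℝ) + 1)) * Real.sin (Real.pi * (j : ℝ) * (x : ℝ) / ((n : ℝ) + 1))

/-- `γ_j = 2 sin(πj/(2(n+1)))`. -/
def gam (n j : ℕ) : ℝ := 2 * Real.sin (Real.pi * (j : ℝ) / (2 * ((n : ℝ) + 1)))

/-- Discrete odd Fourier transform `ĝ_{n,o}(j) = (√2/(n+1)) ∑_{x=1}^n sin(πj u_x) g(u_x)`. -/
def hatO (n : ℕ) (g : ℝ → ℝ) (j : ℤ) : ℝ :=
  Real.sqrt 2 / ((n : ℝ) + 1) *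
    ∑ x ∈ Finset.Icc 1 n,
      Real.sin (Real.pi * (j : ℝ) * ((x : ℝ) / ((n : ℝ) + 1))) * g ((x : ℝ) / ((n : ℝ) + 1))

/-- Discrete even Fourier transform `ĝ_{n,e}(j) = (√2/(n+1)) ∑_{x=0}^n cos(πj u_x) g(u_x)`. -/
def hatE (n : ℕ) (g : ℝ → ℝ) (j : ℤ) : ℝ :=
  Real.sqrt 2 / ((n : ℝ) + 1) *
    ∑ x ∈ Finset.range (n + 1),
      Real.cos (Real.pi * (j : ℝ) * ((x : ℝ) / ((n : ℝ) + 1))) * g ((x : ℝ) / ((n : ℝ) + 1))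

/-! The identity holds term by term in `x`. With `u = x/(n+1)`, `a = πju`, `b = πj'u` and
`θ = πk_j/2`, the value `ψ_j(x-1)` is a multiple of `cos (a - θ)`, and
`2 sin b cos (a - θ) = cos θ (sin (a+b) - sin (a-b)) + sin θ (cos (a-b) - cos (a+b))`.
Summed against `g(u)` these are the odd and even transforms at `j ± j'`. The `x = 0` terms of the
even transforms cancel, and the factor `(1 - δ_{0,j}/2)^{1/2}` can be dropped in front of
`sin θ` because `sin θ = 0` when `j = 0`. -/

open Finset

lemma two_sin_mul_cos_sub (a b θ : ℝ) :
    2 * sin b * cos (a - θ) =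
      cos θ * (sin (a + b) - sin (a - b)) + sin θ * (cos (a - b) - cos (a + b)) := by
  rw [cos_sub, sin_add, sin_sub, cos_add, cos_sub a b]
  ring

lemma sqrt_mul_sqrt_two_div_mul_sqrt_two_mul_div (m c : ℝ) {N : ℝ} (hN : 0 < N) :
    √m * (√(2 / N) * √(2 * c / N)) = 2 * (√(m / 2) * √c * (√2 / N)) := by
  rw [Real.sqrt_div' _ hN.le, Real.sqrt_div' _ hN.le, Real.sqrt_div' _ zero_le_two,
    Real.sqrt_mul zero_le_two]
  field_simp
  rw [Real.sq_sqrt zero_le_two, Real.sq_sqrt hN.le]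
  ring

lemma sqrt_one_sub_ite_mul_sin (j : ℕ) (N : ℝ) :
    √(1 - (if j = 0 then (1:ℝ) else 0) / 2) * sin (π * ((j : ℝ) / N) / 2)
      = sin (π * ((j : ℝ) / N) / 2) := by
  split_ifs with h
  · simp [h]
  · norm_num

lemma phiD_eq (n j x : ℕ) :
    phiD n j x = √(2 / ((n : ℝ) + 1)) * sin (π * j * ((x : ℝ) / ((n : ℝ) + 1))) := by
  rw [phiD, mul_div_assoc]

lemma psiN_sub_one (n j x : ℕ) (hx : 1 ≤ x) :
    psiN n j (x - 1) = √(2 * (1 - (if j = 0 then (1:ℝ) else 0) / 2) / ((n : ℝ) + 1))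
      * cos (π * j * ((x : ℝ) / ((n : ℝ) + 1)) - π * ((j : ℝ) / ((n : ℝ) + 1)) / 2) := by
  rw [psiN, Nat.cast_sub hx, Nat.cast_one]
  congr 3
  · ring
  · field_simp
    ring

lemma sqrt_mul_phiD_mul_psiN_sub_one (n j j' x : ℕ) (hx : 1 ≤ x) :
    √(n : ℝ) * (phiD n j' x * psiN n j (x - 1)) =
      √((n : ℝ) / 2) * (√2 / ((n : ℝ) + 1)) *
        (√(1 - (if j = 0 then (1:ℝ) else 0) / 2) * cos (π * ((j : ℝ) / ((n : ℝ) + 1)) / 2)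
            * (sin (π * ((j : ℝ) + j') * ((x : ℝ) / ((n : ℝ) + 1)))
              - sin (π * ((j : ℝ) - j') * ((x : ℝ) / ((n : ℝ) + 1))))
          + sin (π * ((j : ℝ) / ((n : ℝ) + 1)) / 2)
            * (cos (π * ((j : ℝ) - j') * ((x : ℝ) / ((n : ℝ) + 1)))
              - cos (π * ((j : ℝ) + j') * ((x : ℝ) / ((n : ℝ) + 1))))) := by
  set u : ℝ := (x : ℝ) / ((n : ℝ) + 1)
  set θ : ℝ := π * ((j : ℝ) / ((n : ℝ) + 1)) / 2
  set c : ℝ := 1 - (if j = 0 then (1:ℝ) else 0) / 2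
  have hnorm := sqrt_mul_sqrt_two_div_mul_sqrt_two_mul_div (n : ℝ) c (n.cast_add_one_pos (α := ℝ))
  have htrig := two_sin_mul_cos_sub (π * j * u) (π * j' * u) θ
  have hsin : √c * sin θ = sin θ := sqrt_one_sub_ite_mul_sin j _
  rw [phiD_eq, psiN_sub_one n j x hx,
    show π * ((j : ℝ) + j') * u = π * j * u + π * j' * u by ring,
    show π * ((j : ℝ) - j') * u = π * j * u - π * j' * u by ring]
  linear_combination (sin (π * j' * u) * cos (π * j * u - θ)) * hnorm
    + (√((n : ℝ) / 2) * √c * (√2 / ((n : ℝ) + 1))) * htrig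
    + (√((n : ℝ) / 2) * (√2 / ((n : ℝ) + 1))
        * (cos (π * j * u - π * j' * u) - cos (π * j * u + π * j' * u))) * hsin

lemma hatO_sub (n : ℕ) (g : ℝ → ℝ) (a b : ℤ) :
    hatO n g a - hatO n g b = √2 / ((n : ℝ) + 1) *
      ∑ x ∈ Icc 1 n, (sin (π * a * ((x : ℝ) / ((n : ℝ) + 1)))
        - sin (π * b * ((x : ℝ) / ((n : ℝ) + 1)))) * g ((x : ℝ) / ((n : ℝ) + 1)) := by
  simp only [hatO, ← mul_sub, ← sum_sub_distrib, sub_mul]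

lemma hatE_sub (n : ℕ) (g : ℝ → ℝ) (a b : ℤ) :
    hatE n g a - hatE n g b = √2 / ((n : ℝ) + 1) *
      ∑ x ∈ Icc 1 n, (cos (π * a * ((x : ℝ) / ((n : ℝ) + 1)))
        - cos (π * b * ((x : ℝ) / ((n : ℝ) + 1)))) * g ((x : ℝ) / ((n : ℝ) + 1)) := by
  simp only [hatE, ← mul_sub, ← sum_sub_distrib, sub_mul]
  congr 1
  have hsub : Icc 1 n ⊆ range (n + 1) := fun x hx ↦
    mem_range.mpr (Nat.lt_succ_of_le (mem_Icc.mp hx).2)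
  refine (sum_subset hsub fun x hx hx' ↦ ?_).symm
  obtain rfl : x = 0 := by simp only [mem_range, mem_Icc, not_and, not_le] at hx hx'; omega
  simp

theorem W_formula_general (n : ℕ) (φ : ℝ → ℝ) (j j' : ℕ) :
    Real.sqrt (n : ℝ) *
        (∑ x ∈ Finset.Icc 1 n,
          phiD n j' x * psiN n j (x - 1) * deriv φ ((x : ℝ) / ((n : ℝ) + 1)))
      = -(Real.sqrt ((n : ℝ) / 2)
            * Real.sqrt (1 - (if j = 0 then (1:ℝ) else 0) / 2)
            * Real.cos (Real.pi * ((j : ℝ) / ((n : ℝ) + 1)) / 2)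
            * (hatO n (deriv φ) ((j : ℤ) - (j' : ℤ)) - hatO n (deriv φ) ((j : ℤ) + (j' : ℤ))))
        - Real.sqrt ((n : ℝ) / 2)
            * Real.sin (Real.pi * ((j : ℝ) / ((n : ℝ) + 1)) / 2)
            * (hatE n (deriv φ) ((j : ℤ) + (j' : ℤ)) - hatE n (deriv φ) ((j : ℤ) - (j' : ℤ))) := by
  rw [hatO_sub, hatE_sub, mul_sum]
  simp only [mul_sum, ← sum_neg_distrib, ← sum_sub_distrib]
  refine sum_congr rfl fun x hx ↦ ?_
  rw [← mul_assoc, sqrt_mul_phiD_mul_psiN_sub_one n j j' x (mem_Icc.mp hx).1]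
  push_cast
  ring

/-- Explicit computation of the mixed sum `𝒲_{j,j′}` in terms of
the discrete Fourier transforms of `g = φ′`. -/
theorem W_formula (n : ℕ) (hn : 1 ≤ n) (φ : ℝ → ℝ) (hφ : ContDiff ℝ 1 φ)
    (hsupp : Function.support φ ⊆ Set.Ioo (0:ℝ) 1)
    (j j' : ℕ) (hj : j ≤ n) (hj'1 : 1 ≤ j') (hj' : j' ≤ n) :
    Real.sqrt (n : ℝ) *
        (∑ x ∈ Finset.Icc 1 n,
          phiD n j' x * psiN n j (x - 1) * deriv φ ((x : ℝ) / ((n : ℝ) + 1)))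
      = -(Real.sqrt ((n : ℝ) / 2)
            * Real.sqrt (1 - (if j = 0 then (1:ℝ) else 0) / 2)
            * Real.cos (Real.pi * ((j : ℝ) / ((n : ℝ) + 1)) / 2)
            * (hatO n (deriv φ) ((j : ℤ) - (j' : ℤ)) - hatO n (deriv φ) ((j : ℤ) + (j' : ℤ))))
        - Real.sqrt ((n : ℝ) / 2)
            * Real.sin (Real.pi * ((j : ℝ) / ((n : ℝ) + 1)) / 2)
            * (hatE n (deriv φ) ((j : ℤ) + (j' : ℤ)) - hatE n (deriv φ) ((j : ℤ) - (j' : ℤ))) :=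
  W_formula_general n φ j j'
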